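/- Let f, g ∈ ℂ[z,z⁻¹]. Then f is equicorrelational to g if and only if f·f̄ and g·ḡ are ℂ[z,z⁻¹]-associates. -/

import Mathlib

open LaurentPolynomial
open scoped Classical

/-- The length of a Laurent polynomial: 1 plus the difference between the maximal and
minimal exponents occurring with nonzero coefficient; the length of 0 is 0. -/
noncomputable def len {F : Type*} [Field F] (f : LaurentPolynomial F) : ℤ :=
  if h : f = 0 then 0
  else f.coeff.support.max' (Finsupp.support_nonempty_iff.mpr
      (fun h' => h (congrArg AddMonoidAlgebra.ofCoeff h')))
     - f.coeff.support.min' (Finsupp.support_nonempty_iff.mpr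
      (fun h' => h (congrArg AddMonoidAlgebra.ofCoeff h'))) + 1

/-- Substitution `f(z) ↦ f(z^m)`: the image of `f` under the ring homomorphism
sending `z` to `z^m`. -/
noncomputable def subst {F : Type*} [Field F] (m : ℤ) (f : LaurentPolynomial F) :
    LaurentPolynomial F :=
  AddMonoidAlgebra.mapDomainRingHom F (AddMonoidHom.mulLeft m) f

/-- The subring `F[z,z⁻¹]` of `E[z,z⁻¹]` consisting of Laurent polynomials all of whose
coefficients lie in the subfield `F` of `E`. -/
noncomputable def LRing {E : Type*} [Field E] (F : Subfield E) :
    Subring (LaurentPolynomial E) where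
  carrier := {f : LaurentPolynomial E | ∀ n : ℤ, f.coeff n ∈ F}
  zero_mem' := fun n => F.zero_mem
  one_mem' := by
    intro n
    rw [AddMonoidAlgebra.one_def, AddMonoidAlgebra.coeff_single, Finsupp.single_apply]
    split_ifs
    · exact F.one_mem
    · exact F.zero_mem
  add_mem' := by
    intro f g hf hg n
    rw [AddMonoidAlgebra.coeff_add, Finsupp.add_apply]
    exact add_mem (hf n) (hg n)
  neg_mem' := by
    intro f hf n
    rw [AddMonoidAlgebra.coeff_neg, Finsupp.neg_apply]
    exact neg_mem (hf n)
  mul_mem' := by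
    intro f g hf hg n
    rw [AddMonoidAlgebra.mul_apply]
    refine sum_mem fun a ha => sum_mem fun b hb => ?_
    dsimp only
    split_ifs
    · exact mul_mem (hf a) (hg b)
    · exact zero_mem F

/-- The conjugate of `f(z) = Σ f_j z^j`, namely `f̄(z) = Σ conj(f_j) z^{-j}`. -/
noncomputable def lconj (f : LaurentPolynomial ℂ) : LaurentPolynomial ℂ :=
  AddMonoidAlgebra.ofCoeff
    (Finsupp.equivMapDomain (Equiv.neg ℤ) (Finsupp.mapRange (starRingEnd ℂ) (map_zero _) f.coeff))

/-- `f` and `g` are equicorrelational: `f·f̄ = c·g·ḡ` for some positive real `c`. -/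
def Equicorrelational (f g : LaurentPolynomial ℂ) : Prop :=
  ∃ c : ℝ, 0 < c ∧ f * lconj f = C (c : ℂ) * (g * lconj g)

/-- `f` and `g` are trivially equicorrelational: `g` is a `ℂ[z,z⁻¹]`-associate of `f`
or of `f̄`. -/
def TrivEquicorrelational (f g : LaurentPolynomial ℂ) : Prop :=
  Associated g f ∨ Associated g (lconj f)

/-- A generalized palindrome: `f̄` is a `ℂ[z,z⁻¹]`-associate of `f`. -/
def GenPalindrome (f : LaurentPolynomial ℂ) : Prop :=
  Associated (lconj f) f

/-- `g` is an `F[z,z⁻¹]`-associate of `f`: `g = u·f` for some unit `u` of the subring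
`F[z,z⁻¹]` of `ℂ[z,z⁻¹]`. -/
def FAssoc (F : Subfield ℂ) (g f : LaurentPolynomial ℂ) : Prop :=
  ∃ u : (LRing F)ˣ, g = ((u : LRing F) : LaurentPolynomial ℂ) * f

/-- The `F[z,z⁻¹]`-associate class of `f`. -/
def facl (F : Subfield ℂ) (f : LaurentPolynomial ℂ) : Set (LaurentPolynomial ℂ) :=
  {g | FAssoc F g f}

/-- The `F`-trivial equicorrelationality class of `f`: all elements of `F[z,z⁻¹]`
that are trivially equicorrelational to `f`. -/
def fte (F : Subfield ℂ) (f : LaurentPolynomial ℂ) : Set (LaurentPolynomial ℂ) :=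
  {g | g ∈ LRing F ∧ TrivEquicorrelational f g}

/-- A `k`-ary sequence: a Laurent polynomial whose support is a segment of consecutive
integers and whose nonzero coefficients are complex `k`-th roots of unity. -/
def IsKary (k : ℕ) (f : LaurentPolynomial ℂ) : Prop :=
  (∀ i j l : ℤ, i ≤ j → j ≤ l → f.coeff i ≠ 0 → f.coeff l ≠ 0 → f.coeff j ≠ 0) ∧
  ∀ n : ℤ, f.coeff n ≠ 0 → (f.coeff n) ^ k = 1

/-- A binary sequence: a Laurent polynomial whose support is a segment of consecutive
integers and whose nonzero coefficients all lie in `{1, -1}`. -/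
def IsBinary (f : LaurentPolynomial ℂ) : Prop :=
  (∀ i j l : ℤ, i ≤ j → j ≤ l → f.coeff i ≠ 0 → f.coeff l ≠ 0 → f.coeff j ≠ 0) ∧
  ∀ n : ℤ, f.coeff n ≠ 0 → f.coeff n = 1 ∨ f.coeff n = -1

/-! If `f f̄ = g ḡ u` with `u` a unit, conjugating shows `ū = u`, since `f f̄` and `g ḡ` are
self-conjugate. The units of `ℂ[z,z⁻¹]` are the monomials `a zⁿ`, and `a zⁿ` is self-conjugate
only for `n = 0`. Comparing constant coefficients, which are the positive reals `Σ |f_j|²` and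
`Σ |g_j|²`, then shows that `a` is a positive real. -/

open ComplexConjugate ComplexOrder

namespace LaurentPolynomial

theorem exists_C_mul_T_of_isUnit {R : Type*} [CommRing R] [IsDomain R] {u : R[T;T⁻¹]}
    (hu : IsUnit u) : ∃ (a : R) (n : ℤ), IsUnit a ∧ u = C a * T n := by
  obtain ⟨v, huv⟩ := hu.exists_right_inv
  obtain ⟨m, p, hp⟩ := exists_T_pow u
  obtain ⟨k, q, hq⟩ := exists_T_pow v
  have hpq : p * q = Polynomial.X ^ (m + k) := by
    apply Polynomial.toLaurent_injective
    rw [map_mul, hp, hq, Polynomial.toLaurent_X_pow, Nat.cast_add, T_add]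
    linear_combination (T m * T k : R[T;T⁻¹]) * huv
  obtain ⟨i, -, hpX⟩ := (dvd_prime_pow Polynomial.prime_X _).mp ⟨q, hpq.symm⟩
  obtain ⟨w, hw⟩ := hpX.symm
  obtain ⟨a, ha, hCa⟩ := Polynomial.isUnit_iff.mp w.isUnit
  refine ⟨a, i - m, ha, ?_⟩
  rw [← mul_one u, ← T_zero, ← add_neg_cancel (m : ℤ), ← mul_T_assoc, ← hp, ← hw, ← hCa,
    map_mul, Polynomial.toLaurent_X_pow, Polynomial.toLaurent_C, T_sub]
  ring

end LaurentPolynomial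

noncomputable def lconjRingHom : ℂ[T;T⁻¹] →+* ℂ[T;T⁻¹] :=
  (invert : ℂ[T;T⁻¹] ≃ₐ[ℂ] ℂ[T;T⁻¹]).toRingHom.comp
    (AddMonoidAlgebra.mapRingHom ℤ (starRingEnd ℂ))

theorem coeff_lconj (f : ℂ[T;T⁻¹]) (n : ℤ) : (lconj f).coeff n = conj (f.coeff (-n)) := by
  simp [lconj, Finsupp.equivMapDomain_apply]

theorem lconjRingHom_apply (f : ℂ[T;T⁻¹]) : lconjRingHom f = lconj f := by
  ext n
  simp [lconjRingHom, coeff_lconj]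

theorem lconj_mul (f g : ℂ[T;T⁻¹]) : lconj (f * g) = lconj f * lconj g := by
  simp only [← lconjRingHom_apply, map_mul]

theorem lconj_lconj (f : ℂ[T;T⁻¹]) : lconj (lconj f) = f := by
  ext n; simp [coeff_lconj]

theorem lconj_eq_zero_iff {f : ℂ[T;T⁻¹]} : lconj f = 0 ↔ f = 0 := by
  constructor
  · intro h
    rw [← lconj_lconj f, h, ← lconjRingHom_apply, map_zero]
  · rintro rfl
    rw [← lconjRingHom_apply, map_zero]

theorem lconj_C_mul_T (a : ℂ) (n : ℤ) : lconj (C a * T n) = C (conj a) * T (-n) := by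
  rw [← single_eq_C_mul_T, ← single_eq_C_mul_T]
  ext m
  simp only [coeff_lconj, AddMonoidAlgebra.coeff_single, Finsupp.single_apply, neg_eq_iff_eq_neg]
  split_ifs <;> simp_all

theorem coeff_zero_mul_lconj_self (f : ℂ[T;T⁻¹]) :
    (f * lconj f).coeff 0 = ∑ j ∈ f.coeff.support, f.coeff j * conj (f.coeff j) := by
  rw [AddMonoidAlgebra.coeff_mul, Finsupp.sum]
  refine Finset.sum_congr rfl fun j _ => ?_
  rw [Finsupp.sum, Finset.sum_eq_single (-j) (fun k _ hk => if_neg ?_) (fun hj => ?_),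
    if_pos (add_neg_cancel j), coeff_lconj, neg_neg]
  · omega
  · rw [Finsupp.notMem_support_iff.mp hj, mul_zero, ite_self]

theorem coeff_zero_mul_lconj_self_pos {f : ℂ[T;T⁻¹]} (hf : f ≠ 0) :
    0 < (f * lconj f).coeff 0 := by
  obtain ⟨j, hj⟩ := Finsupp.support_nonempty_iff.mpr (AddMonoidAlgebra.coeff_eq_zero.not.mpr hf)
  rw [coeff_zero_mul_lconj_self]
  exact Finset.sum_pos' (fun i _ => mul_star_self_nonneg _)
    ⟨j, hj, mul_star_self_pos (IsRegular.of_ne_zero (Finsupp.mem_support_iff.mp hj))⟩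

theorem lconj_mul_lconj_self (f : ℂ[T;T⁻¹]) : lconj (f * lconj f) = f * lconj f := by
  rw [lconj_mul, lconj_lconj, mul_comm]

theorem exists_eq_C_of_isUnit_of_lconj_eq {u : ℂ[T;T⁻¹]} (hu : IsUnit u) (h : lconj u = u) :
    ∃ a, u = C a := by
  obtain ⟨a, n, ha, rfl⟩ := exists_C_mul_T_of_isUnit hu
  rw [lconj_C_mul_T, ← single_eq_C_mul_T, ← single_eq_C_mul_T, AddMonoidAlgebra.single_inj] at h
  obtain ⟨hn, -⟩ | ⟨-, ha0⟩ := h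
  · refine ⟨a, ?_⟩
    rw [show n = 0 by omega, T_zero, mul_one]
  · exact absurd ha0 ha.ne_zero

theorem exists_eq_C_mul_of_associated_of_lconj_eq {P Q : ℂ[T;T⁻¹]} (hQ : Q ≠ 0)
    (hPc : lconj P = P) (hQc : lconj Q = Q) (h : Associated P Q) : ∃ a, P = C a * Q := by
  obtain ⟨u, hu⟩ := h.symm
  have hu_conj : lconj (u : ℂ[T;T⁻¹]) = u := by
    refine mul_left_cancel₀ hQ ?_
    rw [← hQc, ← lconj_mul, hu, hPc, hQc, hu]
  obtain ⟨a, ha⟩ := exists_eq_C_of_isUnit_of_lconj_eq u.isUnit hu_conj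
  exact ⟨a, by rw [← hu, ha, mul_comm]⟩

theorem stmt8 (f g : LaurentPolynomial ℂ) :
    Equicorrelational f g ↔ Associated (f * lconj f) (g * lconj g) := by
  refine ⟨fun ⟨c, hc, h⟩ => ?_, fun h => ?_⟩
  · have hC : IsUnit (C (c : ℂ)) := (Ne.isUnit (by exact_mod_cast hc.ne')).map C
    exact h ▸ associated_unit_mul_left _ _ hC
  by_cases hg : g = 0
  · subst hg
    rw [zero_mul, associated_zero_iff_eq_zero] at h
    exact ⟨1, one_pos, by rw [h, zero_mul, mul_zero]⟩
  have hQ : g * lconj g ≠ 0 := mul_ne_zero hg (lconj_eq_zero_iff.not.mpr hg)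
  have hf : f ≠ 0 := left_ne_zero_of_mul (h.ne_zero_iff.mpr hQ)
  obtain ⟨a, ha⟩ := exists_eq_C_mul_of_associated_of_lconj_eq hQ
    (lconj_mul_lconj_self f) (lconj_mul_lconj_self g) h
  have hcoeff : (f * lconj f).coeff 0 = a * (g * lconj g).coeff 0 := by
    rw [ha, ← smul_eq_C_mul]; rfl
  have ha_pos : 0 < a := (pos_iff_pos_of_mul_pos (hcoeff ▸ coeff_zero_mul_lconj_self_pos hf)).mpr
    (coeff_zero_mul_lconj_self_pos hg)
  obtain ⟨c, hc, rfl⟩ := RCLike.pos_iff_exists_ofReal.mp ha_pos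
  exact ⟨c, hc, ha⟩
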